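/- arXiv:math/9907173 — 2 statements merged into one kernel-verified Lean document; each statement's English description precedes it below -/
import Mathlib

section
/- The deconcatenation coproduct Δ(w) = Σ_{uv=w} u⊗v is an algebra homomorphism for the quasi-shuffle product: Δ(w1 * w2) = Δ(w1) * Δ(w2) for all words w1, w2, so (k⟨A⟩, *, Δ) is a bialgebra. -/
open Finsupp Classical

noncomputable section

variable {A : Type} 

/-- The word `w` as a basis element of the free module `k⟨A⟩`. -/
def sing (k : Type) [Field k] (w : List A) : List A →₀ k := Finsupp.single w 1

/-- Left multiplication of a linear combination of words by a letter. -/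
def consF (k : Type) [Field k] (a : A) (f : List A →₀ k) : List A →₀ k :=
  f.mapDomain (List.cons a)

/-- Left multiplication by an element of `A ∪ {0}` (with `none` playing the role of `0`). -/
def oconsF (k : Type) [Field k] : Option A → (List A →₀ k) → (List A →₀ k)
  | none, _ => 0
  | Option.some a, f => consF k a f

/-- The quasi-shuffle product of two words, with structure operation `br : A → A → Option A`
(`none` = 0):  `1*w = w*1 = w` and
`aw₁ * bw₂ = a(w₁*bw₂) + b(aw₁*w₂) + [a,b](w₁*w₂)`. -/
def qsh (k : Type) [Field k] (br : A → A → Option A) : List A → List A → (List A →₀ k)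
  | [], w => sing k w
  | a :: u, [] => sing k (a :: u)
  | a :: u, b :: v =>
      consF k a (qsh k br u (b :: v)) + consF k b (qsh k br (a :: u) v)
        + oconsF k (br a b) (qsh k br u v)
  termination_by w1 w2 => w1.length + w2.length

/-- Linear extension of a map defined on words. -/
def liftOne (k : Type) [Field k] {α β : Type} (f : α → (β →₀ k)) : (α →₀ k) → (β →₀ k) :=
  fun x => x.sum fun u c => c • f u

/-- Bilinear extension of a product defined on words. -/
def liftTwo (k : Type) [Field k] {α β : Type} (f : α → α → (β →₀ k)) :
    (α →₀ k) → (α →₀ k) → (β →₀ k) :=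
  fun x y => x.sum fun u cu => y.sum fun v cv => (cu * cv) • f u v

/-- The degree of a word: the sum of the degrees of its letters. -/
def degW (deg : A → ℕ) (w : List A) : ℕ := (w.map deg).sum

/-- The iterated bracket `[S]` of a nonempty sequence of letters (`none` = 0). -/
def brS (br : A → A → Option A) : List A → Option A
  | [] => none
  | [a] => some a
  | a :: b :: w => (brS br (b :: w)).bind (br a)

/-- The contraction `I[w]` of the word `w` along the composition with list of parts `I`:
consecutive blocks of `w` of lengths given by `I` are contracted via the iterated bracket;
the result is `0` if some bracket vanishes. -/
def contract (k : Type) [Field k] (br : A → A → Option A) : List ℕ → List A → (List A →₀ k)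
  | [], w => (match w with | [] => sing k [] | _ => 0)
  | i :: I, w => oconsF k (brS br (w.take i)) (contract k br I (w.drop i))

end

/-- The elementary tensor of two elements of `k⟨A⟩`, in the model
`k⟨A⟩ ⊗ k⟨A⟩ ≅ (List A × List A) →₀ k`. -/
noncomputable def tensorF (k : Type) [Field k] {A : Type} (f g : List A →₀ k) :
    (List A × List A) →₀ k :=
  f.sum fun u cu => g.sum fun v cv => Finsupp.single (u, v) (cu * cv)

/-- The deconcatenation coproduct on a word: `Δ(w) = Σ_{uv=w} u ⊗ v`. -/
noncomputable def deltaW (k : Type) [Field k] {A : Type} (w : List A) :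
    (List A × List A) →₀ k :=
  ∑ i ∈ Finset.range (w.length + 1), Finsupp.single (w.take i, w.drop i) 1

/-- The componentwise quasi-shuffle product on `k⟨A⟩ ⊗ k⟨A⟩`. -/
noncomputable def qshP (k : Type) [Field k] {A : Type} (br : A → A → Option A)
    (p q : List A × List A) : (List A × List A) →₀ k :=
  tensorF k (qsh k br p.1 q.1) (qsh k br p.2 q.2)

-- ==== aux lemmas ====
section Aux
variable {k : Type} [Field k] {A α β : Type}

theorem liftOne_eq (f : α → β →₀ k) :
    liftOne k f = ⇑(Finsupp.lsum k fun u => LinearMap.toSpanSingleton k (β →₀ k) (f u)) := by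
  funext x
  simp [liftOne, Finsupp.lsum, LinearMap.toSpanSingleton]

theorem liftOne_single (f : α → β →₀ k) (u : α) (c : k) :
    liftOne k f (Finsupp.single u c) = c • f u := by
  rw [liftOne_eq]; simp

theorem liftOne_add (f : α → β →₀ k) (x y : α →₀ k) :
    liftOne k f (x + y) = liftOne k f x + liftOne k f y := by
  rw [liftOne_eq]; exact map_add _ x y

theorem liftOne_zero (f : α → β →₀ k) : liftOne k f (0 : α →₀ k) = 0 := by
  rw [liftOne_eq]; simp

theorem liftOne_finset_sum (f : α → β →₀ k) {ι : Type} (s : Finset ι) (g : ι → α →₀ k) :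
    liftOne k f (∑ i ∈ s, g i) = ∑ i ∈ s, liftOne k f (g i) := by
  rw [liftOne_eq]; exact map_sum _ _ _

theorem liftOne_mapDomain {γ : Type} (g : β → γ →₀ k) (h : α → β) (f : α →₀ k) :
    liftOne k g (Finsupp.mapDomain h f) = liftOne k (g ∘ h) f := by
  unfold liftOne
  exact Finsupp.sum_mapDomain_index (by simp) (fun b m₁ m₂ => add_smul _ _ _)

theorem liftTwo_eq (f : α → α → β →₀ k) (x y : α →₀ k) :
    liftTwo k f x y = liftOne k (fun u => liftOne k (f u) y) x := by
  unfold liftTwo liftOne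
  refine Finsupp.sum_congr fun u _ => ?_
  rw [Finsupp.smul_sum]
  exact Finsupp.sum_congr fun v _ => by rw [smul_smul]

theorem mapDomain_fsum {α β γ : Type} (φ : β → γ) (s : α →₀ k) (v : α → k → (β →₀ k)) :
    Finsupp.mapDomain φ (s.sum v) = s.sum fun a c => Finsupp.mapDomain φ (v a c) := by
  rw [← Finsupp.mapDomain.addMonoidHom_apply]
  rw [map_finsuppSum (Finsupp.mapDomain.addMonoidHom φ)]
  exact Finsupp.sum_congr fun a _ => by rw [Finsupp.mapDomain.addMonoidHom_apply]

theorem tensorF_single_left (u : List A) (c : k) (g : List A →₀ k) :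
    tensorF k (Finsupp.single u c) g = g.sum fun v cv => Finsupp.single (u, v) (c * cv) := by
  unfold tensorF
  exact Finsupp.sum_single_index (by simp)

theorem tensorF_single_single (u v : List A) (c d : k) :
    tensorF k (Finsupp.single u c) (Finsupp.single v d) = Finsupp.single (u, v) (c * d) := by
  rw [tensorF_single_left]
  exact Finsupp.sum_single_index (by simp)

theorem tensorF_add_right (f g₁ g₂ : List A →₀ k) :
    tensorF k f (g₁ + g₂) = tensorF k f g₁ + tensorF k f g₂ := by
  unfold tensorF
  rw [← Finsupp.sum_add]
  refine Finsupp.sum_congr fun u _ => ?_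
  exact Finsupp.sum_add_index' (by simp) (by intros; rw [mul_add, Finsupp.single_add])

theorem tensorF_zero_right (f : List A →₀ k) : tensorF k f (0 : List A →₀ k) = 0 := by
  unfold tensorF; simp

theorem consF_tensorF (a : A) (f g : List A →₀ k) :
    tensorF k (consF k a f) g
      = Finsupp.mapDomain (fun p : List A × List A => (a :: p.1, p.2)) (tensorF k f g) := by
  unfold tensorF consF
  rw [mapDomain_fsum, Finsupp.sum_mapDomain_index (by simp) ?_]
  · refine Finsupp.sum_congr fun u _ => ?_
    rw [mapDomain_fsum]
    exact Finsupp.sum_congr fun v _ => by rw [Finsupp.mapDomain_single]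
  · intro b m₁ m₂
    rw [← Finsupp.sum_add]
    exact Finsupp.sum_congr fun v _ => by rw [add_mul, Finsupp.single_add]

theorem consF_sing (a : A) (w : List A) : consF k a (sing k w) = sing k (a :: w) := by
  unfold consF sing; rw [Finsupp.mapDomain_single]

theorem qsh_nil_left (br : A → A → Option A) (w : List A) : qsh k br [] w = sing k w := by
  rw [qsh]

theorem qsh_nil_right (br : A → A → Option A) (w : List A) : qsh k br w [] = sing k w := by
  cases w <;> rw [qsh]

end Aux

section Aux2
variable {k : Type} [Field k] {A : Type}

theorem mapDomain_finsetsum {β γ ι : Type} (φ : β → γ) (s : Finset ι) (g : ι → β →₀ k) :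
    Finsupp.mapDomain φ (∑ i ∈ s, g i) = ∑ i ∈ s, Finsupp.mapDomain φ (g i) := by
  rw [← Finsupp.mapDomain.addMonoidHom_apply, map_sum]
  exact Finset.sum_congr rfl fun i _ => rfl

theorem tensorF_zero_left (g : List A →₀ k) : tensorF k (0 : List A →₀ k) g = 0 := by
  unfold tensorF; rw [Finsupp.sum_zero_index]

theorem tensorF_add_left (f₁ f₂ g : List A →₀ k) :
    tensorF k (f₁ + f₂) g = tensorF k f₁ g + tensorF k f₂ g := by
  unfold tensorF
  refine Finsupp.sum_add_index' (by simp) ?_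
  intro u c₁ c₂
  rw [← Finsupp.sum_add]
  exact Finsupp.sum_congr fun v _ => by rw [add_mul, Finsupp.single_add]

theorem deltaW_cons (a : A) (w : List A) :
    deltaW k (a :: w)
      = Finsupp.single (([] : List A), a :: w) 1
        + Finsupp.mapDomain (fun p : List A × List A => (a :: p.1, p.2)) (deltaW k w) := by
  unfold deltaW
  rw [mapDomain_finsetsum]
  simp only [List.length_cons]
  rw [Finset.sum_range_succ' _ (w.length + 1)]
  simp only [List.take_succ_cons, List.drop_succ_cons, List.take_zero, List.drop_zero,
    Finsupp.mapDomain_single]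
  rw [add_comm]

theorem L_consF (a : A) (f : List A →₀ k) :
    liftOne k (deltaW k) (consF k a f)
      = tensorF k (sing k []) (consF k a f)
        + Finsupp.mapDomain (fun p : List A × List A => (a :: p.1, p.2))
            (liftOne k (deltaW k) f) := by
  have h1 : tensorF k (sing k []) (consF k a f)
      = f.sum fun w c => Finsupp.single (([] : List A), a :: w) c := by
    unfold sing
    rw [tensorF_single_left]
    unfold consF
    rw [Finsupp.sum_mapDomain_index (by simp) (by intros; simp [mul_add, Finsupp.single_add])]
    exact Finsupp.sum_congr fun w _ => by rw [one_mul]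
  have h2 : Finsupp.mapDomain (fun p : List A × List A => (a :: p.1, p.2))
        (liftOne k (deltaW k) f)
      = f.sum fun w c =>
          c • Finsupp.mapDomain (fun p : List A × List A => (a :: p.1, p.2)) (deltaW k w) := by
    unfold liftOne
    rw [mapDomain_fsum]
    exact Finsupp.sum_congr fun w _ => by rw [Finsupp.mapDomain_smul]
  rw [h1, h2, ← Finsupp.sum_add]
  unfold consF
  rw [liftOne_mapDomain]
  unfold liftOne
  refine Finsupp.sum_congr fun w _ => ?_
  show (f w) • (deltaW k) (a :: w) = _
  rw [deltaW_cons, smul_add, Finsupp.smul_single', mul_one]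

theorem main_nil_left (br : A → A → Option A) (w2 : List A) :
    liftOne k (deltaW k) (qsh k br ([] : List A) w2)
      = ∑ i ∈ Finset.range ((List.length ([] : List A)) + 1),
          ∑ j ∈ Finset.range (w2.length + 1),
            tensorF k (qsh k br (List.take i []) (w2.take j))
              (qsh k br (List.drop i []) (w2.drop j)) := by
  rw [qsh_nil_left]
  unfold sing
  rw [liftOne_single, one_smul]
  simp only [List.length_nil, zero_add, Finset.sum_range_one, List.take_nil, List.drop_nil,
    qsh_nil_left]
  unfold deltaW sing
  exact Finset.sum_congr rfl fun j _ => by rw [tensorF_single_single, one_mul]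

theorem main_nil_right (br : A → A → Option A) (w1 : List A) :
    liftOne k (deltaW k) (qsh k br w1 ([] : List A))
      = ∑ i ∈ Finset.range (w1.length + 1),
          ∑ j ∈ Finset.range ((List.length ([] : List A)) + 1),
            tensorF k (qsh k br (w1.take i) (List.take j []))
              (qsh k br (w1.drop i) (List.drop j [])) := by
  rw [qsh_nil_right]
  unfold sing
  rw [liftOne_single, one_smul]
  simp only [List.length_nil, zero_add, Finset.sum_range_one, List.take_nil, List.drop_nil,
    qsh_nil_right]
  unfold deltaW sing
  exact Finset.sum_congr rfl fun i _ => by rw [tensorF_single_single, one_mul]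

end Aux2

section Main
variable {k : Type} [Field k] {A : Type}

theorem qsh_cons_cons (br : A → A → Option A) (a b : A) (u v : List A) :
    qsh k br (a :: u) (b :: v)
      = consF k a (qsh k br u (b :: v)) + consF k b (qsh k br (a :: u) v)
        + oconsF k (br a b) (qsh k br u v) := by
  rw [qsh]

theorem main_qsh (br : A → A → Option A) :
    ∀ (n : ℕ) (w1 w2 : List A), w1.length + w2.length ≤ n →
      liftOne k (deltaW k) (qsh k br w1 w2)
        = ∑ i ∈ Finset.range (w1.length + 1), ∑ j ∈ Finset.range (w2.length + 1),
            tensorF k (qsh k br (w1.take i) (w2.take j))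
              (qsh k br (w1.drop i) (w2.drop j)) := by
  intro n
  induction n with
  | zero =>
    intro w1 w2 h
    cases w1 with
    | nil => exact main_nil_left br w2
    | cons a u => simp at h
  | succ n IH =>
    intro w1 w2 h
    cases w1 with
    | nil => exact main_nil_left br w2
    | cons a u =>
      cases w2 with
      | nil => exact main_nil_right br (a :: u)
      | cons b v =>
        have hu : u.length + (b :: v).length ≤ n := by simp at h ⊢; omega
        have hv : (a :: u).length + v.length ≤ n := by simp at h ⊢; omega
        have huv : u.length + v.length ≤ n := by simp at h ⊢; omega
        have HA : liftOne k (deltaW k) (consF k a (qsh k br u (b :: v)))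
            = tensorF k (sing k []) (consF k a (qsh k br u (b :: v)))
              + ((∑ i ∈ Finset.range (u.length + 1),
                    tensorF k (sing k (a :: u.take i)) (qsh k br (u.drop i) (b :: v)))
                + ∑ i ∈ Finset.range (u.length + 1), ∑ j ∈ Finset.range (v.length + 1),
                    tensorF k (consF k a (qsh k br (u.take i) (b :: v.take j)))
                      (qsh k br (u.drop i) (v.drop j))) := by
          rw [L_consF, IH u (b :: v) hu, mapDomain_finsetsum]
          congr 1
          rw [← Finset.sum_add_distrib]
          refine Finset.sum_congr rfl fun i _ => ?_
          rw [mapDomain_finsetsum]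
          simp only [List.length_cons]
          rw [Finset.sum_range_succ']
          simp only [List.take_succ_cons, List.drop_succ_cons, List.take_zero, List.drop_zero]
          rw [add_comm]
          congr 1
          · rw [qsh_nil_right, ← consF_tensorF, consF_sing]
          · exact Finset.sum_congr rfl fun j _ => by rw [← consF_tensorF]
        have HB : liftOne k (deltaW k) (consF k b (qsh k br (a :: u) v))
            = tensorF k (sing k []) (consF k b (qsh k br (a :: u) v))
              + ((∑ j ∈ Finset.range (v.length + 1),
                    tensorF k (sing k (b :: v.take j)) (qsh k br (a :: u) (v.drop j)))
                + ∑ i ∈ Finset.range (u.length + 1), ∑ j ∈ Finset.range (v.length + 1),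
                    tensorF k (consF k b (qsh k br (a :: u.take i) (v.take j)))
                      (qsh k br (u.drop i) (v.drop j))) := by
          rw [L_consF, IH (a :: u) v hv, mapDomain_finsetsum]
          congr 1
          simp only [List.length_cons]
          rw [Finset.sum_range_succ']
          simp only [List.take_succ_cons, List.drop_succ_cons, List.take_zero, List.drop_zero]
          rw [add_comm]
          congr 1
          · rw [mapDomain_finsetsum]
            refine Finset.sum_congr rfl fun j _ => ?_
            rw [qsh_nil_left, ← consF_tensorF, consF_sing]
          · refine Finset.sum_congr rfl fun i _ => ?_
            rw [mapDomain_finsetsum]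
            exact Finset.sum_congr rfl fun j _ => by rw [← consF_tensorF]
        have HC : liftOne k (deltaW k) (oconsF k (br a b) (qsh k br u v))
            = tensorF k (sing k []) (oconsF k (br a b) (qsh k br u v))
              + ∑ i ∈ Finset.range (u.length + 1), ∑ j ∈ Finset.range (v.length + 1),
                  tensorF k (oconsF k (br a b) (qsh k br (u.take i) (v.take j)))
                    (qsh k br (u.drop i) (v.drop j)) := by
          cases hbr : br a b with
          | none =>
            simp only [oconsF]
            rw [liftOne_zero, tensorF_zero_right]
            simp [tensorF_zero_left]
          | some c =>
            simp only [oconsF]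
            rw [L_consF, IH u v huv, mapDomain_finsetsum]
            congr 1
            refine Finset.sum_congr rfl fun i _ => ?_
            rw [mapDomain_finsetsum]
            exact Finset.sum_congr rfl fun j _ => by rw [← consF_tensorF]
        have h0 : (∑ j ∈ Finset.range (v.length + 1 + 1),
              tensorF k (qsh k br (List.take 0 (a :: u)) ((b :: v).take j))
                (qsh k br (List.drop 0 (a :: u)) ((b :: v).drop j)))
            = (tensorF k (sing k []) (consF k a (qsh k br u (b :: v)))
                + tensorF k (sing k []) (consF k b (qsh k br (a :: u) v))
                + tensorF k (sing k []) (oconsF k (br a b) (qsh k br u v)))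
              + ∑ j ∈ Finset.range (v.length + 1),
                  tensorF k (sing k (b :: v.take j)) (qsh k br (a :: u) (v.drop j)) := by
          rw [Finset.sum_range_succ']
          simp only [List.take_zero, List.drop_zero, List.take_succ_cons, List.drop_succ_cons,
            qsh_nil_left]
          rw [qsh_cons_cons, tensorF_add_right, tensorF_add_right, add_comm]
        have h1 : (∑ i ∈ Finset.range (u.length + 1), ∑ j ∈ Finset.range (v.length + 1 + 1),
              tensorF k (qsh k br ((a :: u).take (i + 1)) ((b :: v).take j))
                (qsh k br ((a :: u).drop (i + 1)) ((b :: v).drop j)))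
            = (∑ i ∈ Finset.range (u.length + 1),
                  tensorF k (sing k (a :: u.take i)) (qsh k br (u.drop i) (b :: v)))
              + ((∑ i ∈ Finset.range (u.length + 1), ∑ j ∈ Finset.range (v.length + 1),
                    tensorF k (consF k a (qsh k br (u.take i) (b :: v.take j)))
                      (qsh k br (u.drop i) (v.drop j)))
                + (∑ i ∈ Finset.range (u.length + 1), ∑ j ∈ Finset.range (v.length + 1),
                    tensorF k (consF k b (qsh k br (a :: u.take i) (v.take j)))
                      (qsh k br (u.drop i) (v.drop j)))
                + ∑ i ∈ Finset.range (u.length + 1), ∑ j ∈ Finset.range (v.length + 1),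
                    tensorF k (oconsF k (br a b) (qsh k br (u.take i) (v.take j)))
                      (qsh k br (u.drop i) (v.drop j))) := by
          have e : ∀ i ∈ Finset.range (u.length + 1),
              (∑ j ∈ Finset.range (v.length + 1 + 1),
                tensorF k (qsh k br ((a :: u).take (i + 1)) ((b :: v).take j))
                  (qsh k br ((a :: u).drop (i + 1)) ((b :: v).drop j)))
              = tensorF k (sing k (a :: u.take i)) (qsh k br (u.drop i) (b :: v))
                + ∑ j ∈ Finset.range (v.length + 1),
                    (tensorF k (consF k a (qsh k br (u.take i) (b :: v.take j)))
                        (qsh k br (u.drop i) (v.drop j))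
                      + tensorF k (consF k b (qsh k br (a :: u.take i) (v.take j)))
                          (qsh k br (u.drop i) (v.drop j))
                      + tensorF k (oconsF k (br a b) (qsh k br (u.take i) (v.take j)))
                          (qsh k br (u.drop i) (v.drop j))) := by
            intro i _
            rw [Finset.sum_range_succ']
            simp only [List.take_succ_cons, List.drop_succ_cons, List.take_zero, List.drop_zero]
            rw [qsh_nil_right, add_comm]
            congr 1
            refine Finset.sum_congr rfl fun j _ => ?_
            rw [qsh_cons_cons, tensorF_add_left, tensorF_add_left]
          rw [Finset.sum_congr rfl e, Finset.sum_add_distrib]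
          congr 1
          rw [← Finset.sum_add_distrib, ← Finset.sum_add_distrib]
          refine Finset.sum_congr rfl fun i _ => ?_
          rw [← Finset.sum_add_distrib, ← Finset.sum_add_distrib]
        rw [qsh_cons_cons, liftOne_add, liftOne_add, HA, HB, HC]
        simp only [List.length_cons]
        conv_rhs => rw [Finset.sum_range_succ']
        rw [h0, h1]
        abel

end Main

/-- The deconcatenation coproduct is an algebra homomorphism for the
quasi-shuffle product: `Δ(w1 * w2) = Δ(w1) * Δ(w2)`, so `(k⟨A⟩, *, Δ)` is a bialgebra. -/
theorem deconcatenation_is_qsh_hom {A k : Type} [Field k] [CharZero k]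
    (deg : A → ℕ) (hpos : ∀ a, 0 < deg a)
    (br : A → A → Option A)
    (hcomm : ∀ a b, br a b = br b a)
    (hassoc : ∀ a b c, (br a b).bind (fun x => br x c) = (br b c).bind (br a))
    (hdeg : ∀ a b c, br a b = some c → deg c = deg a + deg b) :
    ∀ w1 w2 : List A,
      liftOne k (deltaW k) (qsh k br w1 w2)
        = liftTwo k (qshP k br) (deltaW k w1) (deltaW k w2) := by
  intro w1 w2
  rw [main_qsh br (w1.length + w2.length) w1 w2 le_rfl, liftTwo_eq]
  unfold deltaW
  rw [liftOne_finset_sum]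
  refine Finset.sum_congr rfl fun i _ => ?_
  rw [liftOne_single, one_smul, liftOne_finset_sum]
  refine Finset.sum_congr rfl fun j _ => ?_
  rw [liftOne_single, one_smul]
  rfl
end

section
/- The q-deformed quasi-shuffle product *_q, defined by aw1 *_q bw2 = a(w1 *_q bw2) + q^{|aw1||b|} b(aw1 *_q w2) + q^{|w1||b|} [a,b](w1 *_q w2), is associative. -/
open Finsupp Classical

/-- The `q`-deformed quasi-shuffle product:
`aw₁ *_q bw₂ = a(w₁ *_q bw₂) + q^{|aw₁||b|} b(aw₁ *_q w₂) + q^{|w₁||b|} [a,b](w₁ *_q w₂)`. -/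
noncomputable def qshq (k : Type) [Field k] {A : Type} (deg : A → ℕ)
    (br : A → A → Option A) (q : k) : List A → List A → (List A →₀ k)
  | [], w => sing k w
  | a :: u, [] => sing k (a :: u)
  | a :: u, b :: v =>
      consF k a (qshq k deg br q u (b :: v))
        + q ^ (degW deg (a :: u) * deg b) • consF k b (qshq k deg br q (a :: u) v)
        + q ^ (degW deg u * deg b) • oconsF k (br a b) (qshq k deg br q u v)
  termination_by w1 w2 => w1.length + w2.length

/-! ### Auxiliary machinery for the associativity proof -/

noncomputable section AuxAssoc
open Finsupp
variable {A k : Type} [Field k]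

def lext (g : List A → (List A →₀ k)) (x : List A →₀ k) : List A →₀ k :=
  x.sum fun u c => c • g u

lemma lext_sing (g : List A → (List A →₀ k)) (w : List A) :
    lext g (sing k w) = g w := by
  unfold lext sing
  rw [Finsupp.sum_single_index] <;> simp

lemma lext_zero (g : List A → (List A →₀ k)) : lext g (0 : List A →₀ k) = 0 := by
  simp [lext]

lemma lext_add_right (g : List A → (List A →₀ k)) (x y : List A →₀ k) :
    lext g (x + y) = lext g x + lext g y := by
  unfold lext
  apply Finsupp.sum_add_index <;> intros <;> simp [add_smul]

lemma lext_smul_right (g : List A → (List A →₀ k)) (c : k) (x : List A →₀ k) :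
    lext g (c • x) = c • lext g x := by
  unfold lext
  rw [Finsupp.sum_smul_index (by simp), Finsupp.smul_sum]
  exact Finsupp.sum_congr fun u _ => (mul_smul c (x u) (g u))

lemma lext_consF (g : List A → (List A →₀ k)) (a : A) (x : List A →₀ k) :
    lext g (consF k a x) = lext (fun u => g (a :: u)) x :=
  Finsupp.sum_mapDomain_index_inj (List.cons_injective)

lemma lext_zero_fun (x : List A →₀ k) : lext (fun _ => (0 : List A →₀ k)) x = 0 := by
  simp [lext]

lemma lext_add_out (g h : List A → (List A →₀ k)) (x : List A →₀ k) :
    lext (fun u => g u + h u) x = lext g x + lext h x := by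
  unfold lext
  rw [← Finsupp.sum_add]
  exact Finsupp.sum_congr fun u _ => smul_add _ _ _

lemma lext_smul_out (g : List A → (List A →₀ k)) (c : k) (x : List A →₀ k) :
    lext (fun u => c • g u) x = c • lext g x := by
  unfold lext
  rw [Finsupp.smul_sum]
  exact Finsupp.sum_congr fun u _ => smul_comm _ _ _

lemma lext_consF_out (g : List A → (List A →₀ k)) (a : A) (x : List A →₀ k) :
    lext (fun u => consF k a (g u)) x = consF k a (lext g x) := by
  unfold lext consF
  rw [Finsupp.mapDomain_sum]
  exact Finsupp.sum_congr fun u _ => (Finsupp.mapDomain_smul _ _).symm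

lemma lext_oconsF_out (g : List A → (List A →₀ k)) (ob : Option A) (x : List A →₀ k) :
    lext (fun u => oconsF k ob (g u)) x = oconsF k ob (lext g x) := by
  cases ob with
  | none => simp only [oconsF]; exact lext_zero_fun x
  | some e => simp only [oconsF]; exact lext_consF_out g e x

lemma lext_id (x : List A →₀ k) : lext (fun w => sing k w) x = x := by
  unfold lext sing
  conv_rhs => rw [← Finsupp.sum_single x]
  exact Finsupp.sum_congr fun w _ => by simp [Finsupp.smul_single]

lemma liftTwo_sing_right (f : List A → List A → (List A →₀ k)) (x : List A →₀ k) (w : List A) :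
    liftTwo k f x (sing k w) = lext (fun u => f u w) x := by
  unfold liftTwo lext sing
  refine Finsupp.sum_congr fun u _ => ?_
  rw [Finsupp.sum_single_index] <;> simp

lemma liftTwo_sing_left (f : List A → List A → (List A →₀ k)) (w : List A) (y : List A →₀ k) :
    liftTwo k f (sing k w) y = lext (fun v => f w v) y := by
  unfold liftTwo lext sing
  rw [Finsupp.sum_single_index] <;> simp

lemma liftTwo_sing_sing (f : List A → List A → (List A →₀ k)) (u v : List A) :
    liftTwo k f (sing k u) (sing k v) = f u v := by
  rw [liftTwo_sing_left, lext_sing]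

lemma degW_cons (deg : A → ℕ) (a : A) (w : List A) :
    degW deg (a :: w) = deg a + degW deg w := by
  simp [degW]

end AuxAssoc
noncomputable section AuxAssoc2
open Finsupp
variable {A k : Type} [Field k]

lemma qshq_nil_left (deg : A → ℕ) (br : A → A → Option A) (q : k) (w : List A) :
    qshq k deg br q [] w = sing k w := by
  rw [qshq]

lemma qshq_nil_right (deg : A → ℕ) (br : A → A → Option A) (q : k) (w : List A) :
    qshq k deg br q w [] = sing k w := by
  cases w with
  | nil => rw [qshq]
  | cons a u => rw [qshq]

lemma qshq_cons_cons (deg : A → ℕ) (br : A → A → Option A) (q : k) (a b : A) (u v : List A) :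
    qshq k deg br q (a :: u) (b :: v) =
      consF k a (qshq k deg br q u (b :: v))
        + q ^ (degW deg (a :: u) * deg b) • consF k b (qshq k deg br q (a :: u) v)
        + q ^ (degW deg u * deg b) • oconsF k (br a b) (qshq k deg br q u v) := by
  rw [qshq]

/-- Homogeneity predicate: all words in the support have degree `d`. -/
def Hg (deg : A → ℕ) (d : ℕ) (x : List A →₀ k) : Prop :=
  ∀ w ∈ x.support, degW deg w = d

lemma Hg_zero (deg : A → ℕ) (d : ℕ) : Hg deg d (0 : List A →₀ k) := by
  intro w hw; simp at hw

lemma Hg_add {deg : A → ℕ} {d : ℕ} {x y : List A →₀ k} (hx : Hg deg d x) (hy : Hg deg d y) :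
    Hg deg d (x + y) := by
  intro w hw
  rcases Finset.mem_union.1 (Finsupp.support_add hw) with h | h
  · exact hx w h
  · exact hy w h

lemma Hg_smul {deg : A → ℕ} {d : ℕ} {x : List A →₀ k} (c : k) (hx : Hg deg d x) :
    Hg deg d (c • x) := by
  intro w hw
  exact hx w (Finsupp.support_smul hw)

lemma Hg_sing (deg : A → ℕ) (w : List A) : Hg deg (degW deg w) (sing k w) := by
  intro w' hw'
  unfold sing at hw'
  rcases (Finsupp.mem_support_single _ _ _).1 hw' with ⟨rfl, -⟩
  rfl

lemma Hg_consF {deg : A → ℕ} {d : ℕ} (a : A) {x : List A →₀ k} (hx : Hg deg d x) :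
    Hg deg (deg a + d) (consF k a x) := by
  intro w hw
  unfold consF at hw
  rcases Finset.mem_image.1 (Finsupp.mapDomain_support hw) with ⟨w', hw', rfl⟩
  rw [degW_cons, hx w' hw']

lemma Hg_oconsF {deg : A → ℕ} {br : A → A → Option A}
    (hdeg : ∀ a b c, br a b = some c → deg c = deg a + deg b)
    {d : ℕ} (a b : A) {x : List A →₀ k} (hx : Hg deg d x) :
    Hg deg (deg a + deg b + d) (oconsF k (br a b) x) := by
  rcases h : br a b with _ | e
  · simpa only [oconsF] using Hg_zero deg _
  · simp only [oconsF]
    have := Hg_consF (deg := deg) e hx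
    rwa [hdeg a b e h] at this

lemma qshq_hg {deg : A → ℕ} {br : A → A → Option A}
    (hdeg : ∀ a b c, br a b = some c → deg c = deg a + deg b) (q : k) :
    ∀ (u v : List A), Hg deg (degW deg u + degW deg v) (qshq k deg br q u v) := by
  suffices h : ∀ (n : ℕ) (u v : List A), u.length + v.length ≤ n →
      Hg deg (degW deg u + degW deg v) (qshq k deg br q u v) by
    intro u v; exact h _ u v le_rfl
  intro n
  induction n with
  | zero =>
    intro u v h
    match u, v with
    | [], [] => rw [qshq_nil_left]; simpa [degW] using Hg_sing (k := k) deg ([] : List A)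
    | a :: u, v => exact absurd h (by simp)
    | [], b :: v => rw [qshq_nil_left]; simpa [degW] using Hg_sing (k := k) deg (b :: v)
  | succ n ih =>
  intro u v h
  match u, v with
  | [], v => rw [qshq_nil_left]; simpa [degW] using Hg_sing (k := k) deg v
  | a :: u, [] => rw [qshq_nil_right]; simpa [degW] using Hg_sing (k := k) deg (a :: u)
  | a :: u, b :: v =>
    rw [qshq_cons_cons]
    have h1 := Hg_consF (k := k) (deg := deg) a (ih u (b::v) (by simp at h ⊢; omega))
    have h2 := Hg_consF (k := k) (deg := deg) b (ih (a::u) v (by simp at h ⊢; omega))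
    have h3 := Hg_oconsF (k := k) hdeg a b (ih u v (by simp at h ⊢; omega))
    have hcast : ∀ (d d' : ℕ) (x : List A →₀ k), Hg deg d x → d = d' → Hg deg d' x :=
      fun d d' x hx hdd => hdd ▸ hx
    apply Hg_add (Hg_add ?_ (Hg_smul _ ?_)) (Hg_smul _ ?_)
    · exact hcast _ _ _ h1 (by simp [degW_cons]; omega)
    · exact hcast _ _ _ h2 (by simp [degW_cons]; omega)
    · exact hcast _ _ _ h3 (by simp [degW_cons]; omega)

/-- All words in the support of a quasi-shuffle of a nonempty word are nonempty. -/
lemma qshq_ne_nil {deg : A → ℕ} {br : A → A → Option A} (q : k) (a : A) (u : List A) (v : List A) :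
    ∀ w ∈ (qshq k deg br q (a :: u) v).support, w ≠ [] := by
  intro w hw
  match v with
  | [] =>
    rw [qshq_nil_right] at hw
    rcases (Finsupp.mem_support_single _ _ _).1 hw with ⟨rfl, -⟩
    simp
  | b :: v =>
    rw [qshq_cons_cons] at hw
    rcases Finset.mem_union.1 (Finsupp.support_add hw) with h | h
    · rcases Finset.mem_union.1 (Finsupp.support_add h) with h | h
      · rcases Finset.mem_image.1 (Finsupp.mapDomain_support h) with ⟨w', -, rfl⟩
        simp
      · have h' := Finsupp.support_smul h
        rcases Finset.mem_image.1 (Finsupp.mapDomain_support h') with ⟨w', -, rfl⟩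
        simp
    · have h' := Finsupp.support_smul h
      rcases hb : br a b with _ | e
      · rw [hb] at h'; simp only [oconsF] at h'; simp at h'
      · rw [hb] at h'; simp only [oconsF] at h'
        rcases Finset.mem_image.1 (Finsupp.mapDomain_support h') with ⟨w', -, rfl⟩
        simp

end AuxAssoc2
noncomputable section AuxAssoc3
open Finsupp
variable {A k : Type} [Field k]

/-- The "non-`c`" part of the expansion of `w *_q (c::t)` as a function of the word `w`. -/
def Gfun (k : Type) [Field k] (deg : A → ℕ) (br : A → A → Option A) (q : k)
    (c : A) (t : List A) : List A → (List A →₀ k)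
  | [] => 0
  | e :: w' => consF k e (qshq k deg br q w' (c :: t))
      + q ^ (degW deg w' * deg c) • oconsF k (br e c) (qshq k deg br q w' t)

/-- The "non-`a`" part of the expansion of `(a::u) *_q w` as a function of the word `w`. -/
def G'fun (k : Type) [Field k] (deg : A → ℕ) (br : A → A → Option A) (q : k)
    (a : A) (u : List A) : List A → (List A →₀ k)
  | [] => 0
  | e :: w' => q ^ (degW deg (a :: u) * deg e) • consF k e (qshq k deg br q (a :: u) w')
      + q ^ (degW deg u * deg e) • oconsF k (br a e) (qshq k deg br q u w')

lemma c_split (deg : A → ℕ) (br : A → A → Option A) (q : k) (c : A) (t : List A)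
    (X : List A →₀ k) (D : ℕ) (hne : ∀ w ∈ X.support, w ≠ []) (hX : Hg deg D X) :
    liftTwo k (qshq k deg br q) X (sing k (c :: t))
      = lext (Gfun k deg br q c t) X
        + q ^ (D * deg c) • consF k c (liftTwo k (qshq k deg br q) X (sing k t)) := by
  rw [liftTwo_sing_right, liftTwo_sing_right, ← lext_consF_out, ← lext_smul_out, ← lext_add_out]
  unfold lext
  refine Finsupp.sum_congr fun w hw => ?_
  refine congrArg _ ?_
  obtain ⟨e, w', rfl⟩ := List.exists_cons_of_ne_nil (hne w hw)
  simp only [qshq_cons_cons, Gfun, hX _ hw]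
  abel

lemma a_split (deg : A → ℕ) (br : A → A → Option A) (q : k) (a : A) (u : List A)
    (Y : List A →₀ k) (hne : ∀ w ∈ Y.support, w ≠ []) :
    liftTwo k (qshq k deg br q) (sing k (a :: u)) Y
      = consF k a (liftTwo k (qshq k deg br q) (sing k u) Y)
        + lext (G'fun k deg br q a u) Y := by
  rw [liftTwo_sing_left, liftTwo_sing_left, ← lext_consF_out, ← lext_add_out]
  unfold lext
  refine Finsupp.sum_congr fun w hw => ?_
  refine congrArg _ ?_
  obtain ⟨e, w', rfl⟩ := List.exists_cons_of_ne_nil (hne w hw)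
  simp only [qshq_cons_cons, G'fun]
  abel

lemma lext_G_cons (deg : A → ℕ) (br : A → A → Option A) (q : k) (a c : A) (t : List A)
    (X : List A →₀ k) (d : ℕ) (hX : Hg deg d X) :
    lext (Gfun k deg br q c t) (consF k a X)
      = consF k a (liftTwo k (qshq k deg br q) X (sing k (c :: t)))
        + q ^ (d * deg c) • oconsF k (br a c) (liftTwo k (qshq k deg br q) X (sing k t)) := by
  rw [lext_consF, liftTwo_sing_right, liftTwo_sing_right, ← lext_consF_out, ← lext_oconsF_out,
    ← lext_smul_out, ← lext_add_out]
  unfold lext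
  refine Finsupp.sum_congr fun w hw => ?_
  refine congrArg _ ?_
  simp only [Gfun]
  rw [hX _ hw]

lemma lext_G_oconsF (deg : A → ℕ) (br : A → A → Option A)
    (hassoc : ∀ a b c, (br a b).bind (fun x => br x c) = (br b c).bind (br a))
    (hdeg : ∀ a b c, br a b = some c → deg c = deg a + deg b)
    (q : k) (a b c : A) (t : List A)
    (X : List A →₀ k) (d : ℕ) (hX : Hg deg d X) :
    lext (Gfun k deg br q c t) (oconsF k (br a b) X)
      = oconsF k (br a b) (liftTwo k (qshq k deg br q) X (sing k (c :: t)))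
        + q ^ (d * deg c) • oconsF k ((br b c).bind (br a))
            (liftTwo k (qshq k deg br q) X (sing k t)) := by
  rw [← hassoc a b c]
  rcases h : br a b with _ | e
  · simp only [oconsF, Option.bind_none]
    rw [lext_zero]
    simp [oconsF]
  · simp only [oconsF, Option.bind_some]
    exact lext_G_cons deg br q e c t X d hX

lemma lext_G'_cons (deg : A → ℕ) (br : A → A → Option A) (q : k) (a : A) (u : List A)
    (e : A) (Y : List A →₀ k) :
    lext (G'fun k deg br q a u) (consF k e Y)
      = q ^ (degW deg (a :: u) * deg e) • consF k e (liftTwo k (qshq k deg br q) (sing k (a :: u)) Y)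
        + q ^ (degW deg u * deg e) • oconsF k (br a e) (liftTwo k (qshq k deg br q) (sing k u) Y) := by
  rw [lext_consF, liftTwo_sing_left, liftTwo_sing_left, ← lext_consF_out, ← lext_oconsF_out,
    ← lext_smul_out, ← lext_smul_out, ← lext_add_out]
  unfold lext
  exact Finsupp.sum_congr fun w hw => by simp only [G'fun]

lemma lext_G'_oconsF (deg : A → ℕ) (br : A → A → Option A)
    (hdeg : ∀ a b c, br a b = some c → deg c = deg a + deg b)
    (q : k) (a : A) (u : List A) (b c : A) (Y : List A →₀ k) :
    lext (G'fun k deg br q a u) (oconsF k (br b c) Y)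
      = q ^ (degW deg (a :: u) * (deg b + deg c)) •
            oconsF k (br b c) (liftTwo k (qshq k deg br q) (sing k (a :: u)) Y)
        + q ^ (degW deg u * (deg b + deg c)) •
            oconsF k ((br b c).bind (br a)) (liftTwo k (qshq k deg br q) (sing k u) Y) := by
  rcases h : br b c with _ | e
  · simp only [oconsF, Option.bind_none]
    rw [lext_zero]
    simp [oconsF]
  · simp only [oconsF, Option.bind_some]
    rw [lext_G'_cons, hdeg b c e h]
    rfl

end AuxAssoc3
/-- The `q`-deformed quasi-shuffle product `*_q` is associative. -/
theorem qshq_assoc {A k : Type} [Field k] [CharZero k]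
    (deg : A → ℕ) (hpos : ∀ a, 0 < deg a)
    (br : A → A → Option A)
    (hcomm : ∀ a b, br a b = br b a)
    (hassoc : ∀ a b c, (br a b).bind (fun x => br x c) = (br b c).bind (br a))
    (hdeg : ∀ a b c, br a b = some c → deg c = deg a + deg b)
    (q : k) :
    ∀ w1 w2 w3 : List A,
      liftTwo k (qshq k deg br q) (qshq k deg br q w1 w2) (sing k w3)
        = liftTwo k (qshq k deg br q) (sing k w1) (qshq k deg br q w2 w3) := by
  suffices h : ∀ (n : ℕ) (w1 w2 w3 : List A),
      w1.length + w2.length + w3.length ≤ n →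
      liftTwo k (qshq k deg br q) (qshq k deg br q w1 w2) (sing k w3)
        = liftTwo k (qshq k deg br q) (sing k w1) (qshq k deg br q w2 w3) by
    intro w1 w2 w3; exact h _ w1 w2 w3 le_rfl
  intro n
  induction n with
  | zero =>
    intro w1 w2 w3 h
    match w1, w2, w3 with
    | [], [], [] =>
      rw [qshq_nil_left, liftTwo_sing_sing]
    | a :: u, _, _ => exact absurd h (by simp)
    | [], a :: u, _ => exact absurd h (by simp)
    | [], [], a :: u => exact absurd h (by simp)
  | succ n ih =>
    intro w1 w2 w3 h
    match w1, w2, w3 with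
    | [], w2, w3 =>
      rw [qshq_nil_left, liftTwo_sing_sing, liftTwo_sing_left]
      simp only [qshq_nil_left]
      rw [lext_id]
    | a :: u, [], w3 =>
      rw [qshq_nil_right, qshq_nil_left, liftTwo_sing_sing]
    | a :: u, b :: v, [] =>
      rw [liftTwo_sing_right]
      simp only [qshq_nil_right]
      rw [lext_id, liftTwo_sing_sing]
    | a :: u, b :: v, c :: t =>
      simp only [List.length_cons] at h
      rw [c_split deg br q c t _ _ (qshq_ne_nil q a u (b :: v)) (qshq_hg hdeg q (a :: u) (b :: v))]
      rw [a_split deg br q a u _ (qshq_ne_nil q b v (c :: t))]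
      rw [ih (a :: u) (b :: v) t (by simp only [List.length_cons]; omega)]
      rw [qshq_cons_cons deg br q a b u v]
      rw [lext_add_right, lext_add_right, lext_smul_right, lext_smul_right]
      rw [lext_G_cons deg br q a c t _ _ (qshq_hg hdeg q u (b :: v)),
          lext_G_cons deg br q b c t _ _ (qshq_hg hdeg q (a :: u) v),
          lext_G_oconsF deg br hassoc hdeg q a b c t _ _ (qshq_hg hdeg q u v)]
      rw [ih u (b :: v) (c :: t) (by simp only [List.length_cons]; omega),
          ih (a :: u) v (c :: t) (by simp only [List.length_cons]; omega),
          ih u v (c :: t) (by simp only [List.length_cons]; omega),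
          ih u (b :: v) t (by simp only [List.length_cons]; omega),
          ih (a :: u) v t (by simp only [List.length_cons]; omega),
          ih u v t (by omega)]
      rw [qshq_cons_cons deg br q b c v t]
      rw [lext_add_right, lext_add_right, lext_smul_right, lext_smul_right]
      rw [lext_G'_cons deg br q a u b, lext_G'_cons deg br q a u c,
          lext_G'_oconsF deg br hdeg q a u b c]
      simp only [degW_cons]
      module
end
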